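/- Continuity of the Weierstrass section: let ν ∈ ℤ^ℕ, K ⊂ ℂ∖ℕ compact, ε > 0. Then there exists k₀ ∈ ℕ such that for every μ ∈ ℤ^ℕ with μ(k) = ν(k) for all k < k₀, the functions f_μ and f_ν (defined by f_λ(z) = ∏_{k=1}^∞ E_{m_k^λ}(z/k)^{λ(k)} with m_k^λ = k + ⌈max(0, log|λ(k)|)⌉) satisfy sup_{z∈K} |f_μ(z) − f_ν(z)| < ε. -/

import Mathlib

/-- The Weierstrass factor `E_m(z) = (1 - z) * exp(∑_{j=1}^m z^j / j)`. -/
noncomputable def weierstrassFactor (m : ℕ) (z : ℂ) : ℂ :=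
  (1 - z) * Complex.exp (∑ j ∈ Finset.Icc 1 m, z ^ j / j)

/-- `m_k^ν = k + ⌈max(0, log |ν(k)|)⌉`. -/
noncomputable def mExp (ν : ℕ → ℤ) (k : ℕ) : ℕ :=
  k + ⌈max 0 (Real.log |(ν k : ℝ)|)⌉₊

/-- `f_ν(z) = ∏_{k=1}^∞ E_{m_k^ν}(z/k)^{ν(k)}`. -/
noncomputable def weierstrassProduct (ν : ℕ → ℤ) (z : ℂ) : ℂ :=
  ∏' k : ℕ, weierstrassFactor (mExp ν (k + 1)) (z / (k + 1)) ^ (ν (k + 1))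

/-!
Each factor is `exp (ν(k) L_k(z))` with `L_k` a logarithm of `E_{m_k}(z/k)`, and
`|L_k(z)| ≤ 2 |z/k|^(m_k+1)`. The exponent `m_k` is chosen so large that this beats the
multiplicity `ν(k)`: once `k ≥ 3|z|` the term is at most `2 · 3^(-(k+1))`, whatever `ν` is.
Hence `f_λ(z) = P_n(z) exp(S_λ)` with `P_n` the partial product and `|S_λ| ≤ 3^(-(n+1))`
as soon as `n ≥ 3|z|`. If `μ` agrees with `ν` up to `n`, the partial products coincide and
`f_μ - f_ν = f_ν (exp(S_μ - S_ν) - 1)`, which is small because `f_ν` is bounded on `K`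
(it is a continuous partial product times a bounded exponential).
-/

open Complex Finset Filter Topology

noncomputable def weierstrassFactorLog (m : ℕ) (w : ℂ) : ℂ :=
  log (1 - w) + ∑ j ∈ Icc 1 m, w ^ j / j

lemma exp_weierstrassFactorLog (m : ℕ) {w : ℂ} (hw : w ≠ 1) :
    exp (weierstrassFactorLog m w) = weierstrassFactor m w := by
  rw [weierstrassFactorLog, exp_add, exp_log (sub_ne_zero.2 hw.symm), weierstrassFactor]

lemma logTaylor_succ_neg (m : ℕ) (w : ℂ) :
    logTaylor (m + 1) (-w) = -∑ j ∈ Icc 1 m, w ^ j / j := by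
  rw [logTaylor, range_eq_Ico, sum_eq_sum_Ico_succ_bot m.succ_pos, Nat.succ_eq_add_one,
    Ico_add_one_right_eq_Icc, ← sum_neg_distrib]
  simp only [Nat.cast_zero, div_zero, zero_add]
  refine sum_congr rfl fun j _ => ?_
  rw [neg_pow w, ← mul_assoc, ← pow_add, Odd.neg_one_pow ⟨j, by ring⟩]
  ring

lemma norm_weierstrassFactorLog_le (m : ℕ) {w : ℂ} (hw : ‖w‖ ≤ 1 / 2) :
    ‖weierstrassFactorLog m w‖ ≤ 2 * ‖w‖ ^ (m + 1) := by
  have h := norm_log_sub_logTaylor_le m (z := -w) (by rw [norm_neg]; linarith)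
  rw [← sub_eq_add_neg, logTaylor_succ_neg, sub_neg_eq_add, norm_neg] at h
  have hinv : (1 - ‖w‖)⁻¹ ≤ 2 := by
    rw [inv_le_comm₀ (by linarith) two_pos]
    linarith
  calc ‖weierstrassFactorLog m w‖ ≤ ‖w‖ ^ (m + 1) * (1 - ‖w‖)⁻¹ / (m + 1) := h
    _ ≤ ‖w‖ ^ (m + 1) * (1 - ‖w‖)⁻¹ :=
        div_le_self (mul_nonneg (by positivity) (inv_nonneg.2 (by linarith)))
          (by linarith [m.cast_nonneg (α := ℝ)])
    _ ≤ 2 * ‖w‖ ^ (m + 1) := by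
        rw [mul_comm]
        gcongr

/-- Since `|a| ≤ e^r`, the extra `r` in the exponent absorbs `a`: `|a| (1/3)^r ≤ (e/3)^r ≤ 1`. -/
lemma norm_intCast_mul_weierstrassFactorLog_le (a : ℤ) (k : ℕ) {w : ℂ} (hw : ‖w‖ ≤ 1 / 3) :
    ‖(a : ℂ) * weierstrassFactorLog (k + ⌈max 0 (Real.log |(a : ℝ)|)⌉₊) w‖
      ≤ 2 * (1 / 3) ^ (k + 1) := by
  set r := ⌈max 0 (Real.log |(a : ℝ)|)⌉₊
  have ha : |(a : ℝ)| ≤ Real.exp r :=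
    (Real.le_exp_log _).trans (Real.exp_le_exp.2 ((le_max_right _ _).trans (Nat.le_ceil _)))
  have har : |(a : ℝ)| * (1 / 3) ^ r ≤ 1 := calc
    |(a : ℝ)| * (1 / 3) ^ r ≤ Real.exp r * (1 / 3) ^ r := by gcongr
    _ = (Real.exp 1 / 3) ^ r := by rw [div_pow, div_pow, Real.exp_one_pow]; ring
    _ ≤ 1 := pow_le_one₀ (by positivity) (by linarith [Real.exp_one_lt_d9])
  have hlog : ‖weierstrassFactorLog (k + r) w‖ ≤ 2 * (1 / 3) ^ (k + r + 1) :=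
    (norm_weierstrassFactorLog_le _ (by linarith)).trans (by gcongr)
  calc ‖(a : ℂ) * weierstrassFactorLog (k + r) w‖
      = |(a : ℝ)| * ‖weierstrassFactorLog (k + r) w‖ := by rw [norm_mul, norm_intCast]
    _ ≤ |(a : ℝ)| * (2 * (1 / 3) ^ (k + r + 1)) := by gcongr
    _ = |(a : ℝ)| * (1 / 3) ^ r * (2 * (1 / 3) ^ (k + 1)) := by ring
    _ ≤ 2 * (1 / 3) ^ (k + 1) := mul_le_of_le_one_left (by positivity) har

lemma exists_tprod_eq_prod_range_mul_exp {f g : ℕ → ℂ} {n : ℕ} {c r : ℝ} (hr₀ : 0 ≤ r)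
    (hr₁ : r < 1) (hfg : ∀ k ≥ n, f k = exp (g k)) (hg : ∀ k ≥ n, ‖g k‖ ≤ c * r ^ k) :
    ∃ S, ‖S‖ ≤ c * r ^ n / (1 - r) ∧ ∏' k, f k = (∏ k ∈ range n, f k) * exp S := by
  have hgeom : HasSum (fun i => c * r ^ (i + n)) (c * r ^ n / (1 - r)) := by
    rw [div_eq_mul_inv, show (fun i => c * r ^ (i + n)) = fun i => c * r ^ n * r ^ i by
      funext i; ring]
    exact (hasSum_geometric_of_lt_one hr₀ hr₁).mul_left (c * r ^ n)
  have hbound (i : ℕ) : ‖g (i + n)‖ ≤ c * r ^ (i + n) := hg _ (by omega)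
  have hsum : Summable fun i => g (i + n) := .of_norm_bounded hgeom.summable hbound
  refine ⟨∑' i, g (i + n), tsum_of_norm_bounded hgeom hbound, ?_⟩
  have hprod : HasProd (fun i => f (i + n)) (exp (∑' i, g (i + n))) := by
    convert hsum.hasSum.cexp using 1
    ext i
    exact hfg _ (by omega)
  rw [← hprod.multipliable.prod_mul_tprod_nat_mul', hprod.tprod_eq]

noncomputable def weierstrassPartialProduct (ν : ℕ → ℤ) (n : ℕ) (z : ℂ) : ℂ :=
  ∏ k ∈ range n, weierstrassFactor (mExp ν (k + 1)) (z / (k + 1)) ^ ν (k + 1)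

lemma div_natCast_add_one_ne_one {z : ℂ} {k : ℕ} (hz : z ≠ k + 1) : z / (k + 1) ≠ 1 :=
  fun h => hz ((div_eq_one_iff_eq (Nat.cast_add_one_ne_zero k)).1 h)

lemma exists_weierstrassProduct_eq_partialProduct_mul_exp (ν : ℕ → ℤ) {z : ℂ}
    (hz : ∀ k : ℕ, z ≠ k + 1) {n : ℕ} (hn : 3 * ‖z‖ ≤ n) :
    ∃ S, ‖S‖ ≤ (1 / 3) ^ (n + 1) ∧
      weierstrassProduct ν z = weierstrassPartialProduct ν n z * exp S := by
  have hw (k : ℕ) (hk : k ≥ n) : ‖z / (k + 1)‖ ≤ 1 / 3 := by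
    rw [norm_div, ← Nat.cast_add_one, Complex.norm_natCast, div_le_iff₀ (by positivity)]
    have : (n : ℝ) ≤ k := by exact_mod_cast hk
    push_cast
    linarith
  obtain ⟨S, hS, h⟩ := exists_tprod_eq_prod_range_mul_exp (n := n) (c := 2 * (1 / 3) ^ 2)
    (by norm_num : (0 : ℝ) ≤ 1 / 3) (by norm_num)
    (g := fun k => (ν (k + 1) : ℂ) * weierstrassFactorLog (mExp ν (k + 1)) (z / (k + 1)))
    (fun k _ => by
      rw [exp_int_mul, exp_weierstrassFactorLog _ (div_natCast_add_one_ne_one (hz k))])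
    (fun k hk =>
      (norm_intCast_mul_weierstrassFactorLog_le (ν (k + 1)) (k + 1) (hw k hk)).trans_eq
        (by ring))
  exact ⟨S, hS.trans_eq (by ring), h⟩

lemma continuousOn_weierstrassPartialProduct (ν : ℕ → ℤ) (n : ℕ) :
    ContinuousOn (weierstrassPartialProduct ν n) {z | ∀ k : ℕ, z ≠ k + 1} := by
  refine continuousOn_finsetProd _ fun k _ => ContinuousOn.zpow₀ ?_ _ fun z hz => .inl ?_
  · exact Continuous.continuousOn (by unfold weierstrassFactor; fun_prop)
  · rw [← exp_weierstrassFactorLog _ (div_natCast_add_one_ne_one (hz k))]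
    exact exp_ne_zero _

lemma exists_norm_weierstrassProduct_le (ν : ℕ → ℤ) {K : Set ℂ} (hK : IsCompact K)
    (hKD : K ⊆ {z | ∀ k : ℕ, z ≠ k + 1}) : ∃ B, ∀ z ∈ K, ‖weierstrassProduct ν z‖ ≤ B := by
  obtain ⟨C, hC⟩ := hK.exists_bound_of_continuousOn continuousOn_id
  obtain ⟨A, hA⟩ := hK.exists_bound_of_continuousOn
    ((continuousOn_weierstrassPartialProduct ν ⌈3 * C⌉₊).mono hKD)
  refine ⟨A * Real.exp 1, fun z hz => ?_⟩
  obtain ⟨S, hS, hf⟩ := exists_weierstrassProduct_eq_partialProduct_mul_exp ν (hKD hz)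
    (n := ⌈3 * C⌉₊) ((mul_le_mul_of_nonneg_left (hC z hz) zero_le_three).trans (Nat.le_ceil _))
  rw [hf, norm_mul]
  refine mul_le_mul (hA z hz) ((norm_exp_le_exp_norm S).trans (Real.exp_le_exp.2 ?_))
    (norm_nonneg _) ((norm_nonneg _).trans (hA z hz))
  exact hS.trans (pow_le_one₀ (by norm_num) (by norm_num))

lemma norm_weierstrassProduct_sub_le {μ ν : ℕ → ℤ} {n : ℕ} (hμν : ∀ k ≤ n, μ k = ν k) {z : ℂ}
    (hz : ∀ k : ℕ, z ≠ k + 1) (hn : 3 * ‖z‖ ≤ n) :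
    ‖weierstrassProduct μ z - weierstrassProduct ν z‖
      ≤ 4 * (1 / 3) ^ (n + 1) * ‖weierstrassProduct ν z‖ := by
  obtain ⟨Sμ, hSμ, hfμ⟩ := exists_weierstrassProduct_eq_partialProduct_mul_exp μ hz hn
  obtain ⟨Sν, hSν, hfν⟩ := exists_weierstrassProduct_eq_partialProduct_mul_exp ν hz hn
  have hP : weierstrassPartialProduct μ n z = weierstrassPartialProduct ν n z :=
    prod_congr rfl fun k hk => by
      rw [mExp, mExp, hμν (k + 1) (by simpa using hk)]
  have hdiff : weierstrassProduct μ z - weierstrassProduct ν z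
      = weierstrassProduct ν z * (exp (Sμ - Sν) - 1) := by
    rw [hfμ, hfν, hP, exp_sub]
    field_simp
  have hS : ‖Sμ - Sν‖ ≤ 2 * (1 / 3) ^ (n + 1) := (norm_sub_le _ _).trans (by linarith)
  have hS₁ : 2 * (1 / 3 : ℝ) ^ (n + 1) ≤ 1 := by
    rw [pow_succ]
    nlinarith [pow_le_one₀ (n := n) (by norm_num : (0 : ℝ) ≤ 1 / 3) (by norm_num)]
  rw [hdiff, norm_mul, mul_comm]
  gcongr
  calc ‖exp (Sμ - Sν) - 1‖ ≤ 2 * ‖Sμ - Sν‖ := norm_exp_sub_one_le (hS.trans hS₁)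
    _ ≤ 4 * (1 / 3) ^ (n + 1) := by linarith

/-- Continuity of the Weierstrass section: given `ν`, a compact `K ⊆ ℂ ∖ ℕ` and
`ε > 0`, there is `k₀` such that `sup_K |f_μ - f_ν| < ε` whenever `μ` agrees with
`ν` below `k₀`. -/
theorem weierstrassProduct_section_continuity (ν : ℕ → ℤ) (K : Set ℂ)
    (hK : IsCompact K) (hKD : K ⊆ {z : ℂ | ∀ k : ℕ, 1 ≤ k → z ≠ (k : ℂ)})
    (ε : ℝ) (hε : 0 < ε) :
    ∃ k₀ : ℕ, ∀ μ : ℕ → ℤ, (∀ k < k₀, μ k = ν k) →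
      ∀ z ∈ K, ‖weierstrassProduct μ z - weierstrassProduct ν z‖ < ε := by
  have hK₁ : K ⊆ {z | ∀ k : ℕ, z ≠ k + 1} := fun z hz k => by
    exact_mod_cast hKD hz (k + 1) k.succ_pos
  obtain ⟨C, hC⟩ := hK.exists_bound_of_continuousOn continuousOn_id
  obtain ⟨B, hB⟩ := exists_norm_weierstrassProduct_le ν hK hK₁
  have hsmall : Tendsto (fun n : ℕ => 4 * (1 / 3 : ℝ) ^ (n + 1) * B) atTop (𝓝 0) := by
    simpa using ((tendsto_pow_atTop_nhds_zero_of_lt_one (by norm_num : (0 : ℝ) ≤ 1 / 3)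
      (by norm_num)).comp (tendsto_add_atTop_nat 1)).const_mul 4 |>.mul_const B
  obtain ⟨n, hnε, hnC⟩ :=
    ((hsmall.eventually (gt_mem_nhds hε)).and (eventually_ge_atTop ⌈3 * C⌉₊)).exists
  refine ⟨n + 1, fun μ hμ z hz => ?_⟩
  calc ‖weierstrassProduct μ z - weierstrassProduct ν z‖
      ≤ 4 * (1 / 3) ^ (n + 1) * ‖weierstrassProduct ν z‖ :=
        norm_weierstrassProduct_sub_le (fun k hk => hμ k (Nat.lt_succ_of_le hk)) (hK₁ hz)
          ((mul_le_mul_of_nonneg_left (hC z hz) zero_le_three).trans (Nat.ceil_le.1 hnC))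
    _ ≤ 4 * (1 / 3) ^ (n + 1) * B := by gcongr; exact hB z hz
    _ < ε := hnε
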